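/- arXiv:1912.04215 — 2 statements merged into one kernel-verified Lean document; each statement's English description precedes it below -/
import Mathlib

section
/- The transform G is continuously differentiable on ℝ and its derivative satisfies G'(x) > 0 for every x ∈ ℝ. -/
/-- The bump function `φ(u) = (1+u)^3 (1-u)^3` for `|u| ≤ 1` and `φ(u) = 0` otherwise. -/
noncomputable def bumpPhi (u : ℝ) : ℝ := if |u| ≤ 1 then (1 + u) ^ 3 * (1 - u) ^ 3 else 0

/-- The transform `G(x) = x + ∑ k, α k * φ((x - ζ k)/c) * (x - ζ k) * |x - ζ k|`. -/
noncomputable def Gtransform (m : ℕ) (ζ α : Fin m → ℝ) (c : ℝ) (x : ℝ) : ℝ :=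
  x + ∑ k : Fin m, α k * bumpPhi ((x - ζ k) / c) * ((x - ζ k) * |x - ζ k|)

/-!
Each summand of `G` is `α c² ψ((x - ζ)/c)` with `ψ u = φ u · u|u|`, and `φ u = max(1 - u², 0)³`.
Both `u ↦ u|u|` and `u ↦ max(u, 0)³` are `C¹` (their derivatives `2|u|` and `3 max(u, 0)²`
extend continuously across `0`), so `ψ` is `C¹` with `ψ' u = 2|u| M² (M - 3u²)`, where
`M = max(1 - u², 0)`. This vanishes for `|u| ≥ 1` and is bounded by `6`. As the centres `ζ_k`
are more than `2c` apart, at each `x` at most one term of `G' x = 1 + ∑ α_k c ψ'((x - ζ_k)/c)`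
is nonzero, and that term has absolute value at most `6 |α_k| c < 1`.
-/

theorem hasDerivAt_mul_abs (x : ℝ) : HasDerivAt (fun y ↦ y * |y|) (2 * |x|) x := by
  refine hasDerivAt_of_hasDerivAt_of_ne' (g := fun y ↦ 2 * |y|) (x := 0) (fun y hy ↦ ?_)
    (by fun_prop) (by fun_prop) x
  refine ((hasDerivAt_id y).mul (hasDerivAt_abs hy)).congr_deriv ?_
  rw [id_eq, self_mul_sign]
  ring

theorem hasDerivAt_max_zero_pow_three (x : ℝ) :
    HasDerivAt (fun y ↦ max y 0 ^ 3) (3 * max x 0 ^ 2) x := by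
  refine hasDerivAt_of_hasDerivAt_of_ne' (g := fun y ↦ 3 * max y 0 ^ 2) (x := 0)
    (fun y hy ↦ ?_) (by fun_prop) (by fun_prop) x
  rcases hy.lt_or_gt with hy | hy
  · refine (hasDerivAt_const y 0).congr_of_eventuallyEq ?_ |>.congr_deriv (by simp [hy.le])
    filter_upwards [Iio_mem_nhds hy] with z hz
    simp [(show z < 0 from hz).le]
  · refine (hasDerivAt_pow 3 y).congr_of_eventuallyEq ?_ |>.congr_deriv (by simp [hy.le])
    filter_upwards [Ioi_mem_nhds hy] with z hz
    simp [(show 0 < z from hz).le]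

theorem bumpPhi_eq_max_pow (u : ℝ) : bumpPhi u = max (1 - u ^ 2) 0 ^ 3 := by
  rw [bumpPhi]
  split_ifs with h <;> rw [← sq_le_one_iff_abs_le_one] at h
  · rw [max_eq_left (by linarith)]
    ring
  · rw [max_eq_right (by linarith)]
    ring

theorem hasDerivAt_bumpPhi (u : ℝ) :
    HasDerivAt bumpPhi (-6 * u * max (1 - u ^ 2) 0 ^ 2) u := by
  rw [funext bumpPhi_eq_max_pow]
  refine ((hasDerivAt_max_zero_pow_three _).comp u
    ((hasDerivAt_pow 2 u).const_sub 1)).congr_deriv ?_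
  push_cast
  ring

noncomputable def bumpSignedSq (u : ℝ) : ℝ := bumpPhi u * (u * |u|)

noncomputable def bumpSignedSqDeriv (u : ℝ) : ℝ :=
  2 * |u| * max (1 - u ^ 2) 0 ^ 2 * (max (1 - u ^ 2) 0 - 3 * u ^ 2)

theorem hasDerivAt_bumpSignedSq (u : ℝ) : HasDerivAt bumpSignedSq (bumpSignedSqDeriv u) u := by
  refine ((hasDerivAt_bumpPhi u).mul (hasDerivAt_mul_abs u)).congr_deriv ?_
  rw [bumpSignedSqDeriv, bumpPhi_eq_max_pow]
  ring

@[fun_prop]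
theorem continuous_bumpSignedSqDeriv : Continuous bumpSignedSqDeriv := by
  unfold bumpSignedSqDeriv
  fun_prop

theorem bumpSignedSqDeriv_eq_zero {u : ℝ} (hu : 1 ≤ |u|) : bumpSignedSqDeriv u = 0 := by
  have : 1 ≤ u ^ 2 := (one_le_sq_iff_one_le_abs u).2 hu
  rw [bumpSignedSqDeriv, max_eq_right (by linarith)]
  ring

theorem abs_bumpSignedSqDeriv_le (u : ℝ) : |bumpSignedSqDeriv u| ≤ 6 := by
  rcases le_or_gt 1 |u| with hu | hu
  · simp [bumpSignedSqDeriv_eq_zero hu]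
  have hu2 : u ^ 2 < 1 := (sq_lt_one_iff_abs_lt_one u).2 hu
  rw [bumpSignedSqDeriv, max_eq_left (by linarith), abs_le]
  have := abs_nonneg u
  constructor <;> nlinarith [sq_nonneg u, mul_nonneg this (sq_nonneg (1 - u ^ 2))]

theorem Gtransform_eq {m : ℕ} (ζ α : Fin m → ℝ) {c : ℝ} (hc : 0 < c) :
    Gtransform m ζ α c = fun x ↦ x + ∑ k, α k * c ^ 2 * bumpSignedSq ((x - ζ k) / c) := by
  funext x
  simp only [Gtransform, bumpSignedSq, abs_div, abs_of_pos hc]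
  congr 1
  refine Finset.sum_congr rfl fun k _ ↦ ?_
  field_simp

theorem hasDerivAt_Gtransform {m : ℕ} (ζ α : Fin m → ℝ) {c : ℝ} (hc : 0 < c) (x : ℝ) :
    HasDerivAt (Gtransform m ζ α c)
      (1 + ∑ k, α k * c * bumpSignedSqDeriv ((x - ζ k) / c)) x := by
  have hterm (k : Fin m) : HasDerivAt (fun x ↦ α k * c ^ 2 * bumpSignedSq ((x - ζ k) / c))
      (α k * c * bumpSignedSqDeriv ((x - ζ k) / c)) x := by
    have hu := ((hasDerivAt_id' x).sub_const (ζ k)).div_const c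
    refine (((hasDerivAt_bumpSignedSq _).comp x hu).const_mul (α k * c ^ 2)).congr_deriv ?_
    field_simp
  rw [Gtransform_eq ζ α hc]
  exact (hasDerivAt_id x).add (HasDerivAt.fun_sum fun k _ ↦ hterm k)

theorem two_mul_lt_sub_of_lt {m : ℕ} {ζ : Fin m → ℝ} {c : ℝ} (hζ : Monotone ζ)
    (hc : ∀ (k : Fin m) (h : (k : ℕ) + 1 < m), c < (ζ ⟨(k : ℕ) + 1, h⟩ - ζ k) / 2)
    {j k : Fin m} (hjk : j < k) : 2 * c < ζ k - ζ j := by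
  have hsucc : (j : ℕ) + 1 < m := lt_of_le_of_lt hjk k.isLt
  have hgap := hc j hsucc
  have hmono : ζ ⟨(j : ℕ) + 1, hsucc⟩ ≤ ζ k := hζ (Fin.mk_le_of_le_val hjk)
  linarith

theorem le_abs_sub_of_abs_sub_lt {m : ℕ} {ζ : Fin m → ℝ} {c : ℝ} (hζ : Monotone ζ)
    (hc : ∀ (k : Fin m) (h : (k : ℕ) + 1 < m), c < (ζ ⟨(k : ℕ) + 1, h⟩ - ζ k) / 2)
    {x : ℝ} {j k : Fin m} (hjk : j ≠ k) (hk : |x - ζ k| < c) : c ≤ |x - ζ j| := by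
  have hsep : 2 * c < |ζ j - ζ k| := by
    rcases hjk.lt_or_gt with h | h
    · rw [abs_sub_comm]
      exact (two_mul_lt_sub_of_lt hζ hc h).trans_le (le_abs_self _)
    · exact (two_mul_lt_sub_of_lt hζ hc h).trans_le (le_abs_self _)
  have htri := abs_sub_le (ζ j) x (ζ k)
  rw [abs_sub_comm (ζ j) x] at htri
  linarith

theorem Gtransform_contDiff_deriv_pos_general
    (m : ℕ) (ζ α : Fin m → ℝ) (hζ : StrictMono ζ)
    (c : ℝ) (hc0 : 0 < c) (hc1 : ∀ k, c < 1 / (6 * |α k|))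
    (hc2 : ∀ (k : Fin m) (h : (k : ℕ) + 1 < m), c < (ζ ⟨(k : ℕ) + 1, h⟩ - ζ k) / 2) :
    ContDiff ℝ 1 (Gtransform m ζ α c) ∧ ∀ x : ℝ, 0 < deriv (Gtransform m ζ α c) x := by
  have hG := hasDerivAt_Gtransform ζ α hc0
  have hderiv : deriv (Gtransform m ζ α c) =
      fun x ↦ 1 + ∑ k, α k * c * bumpSignedSqDeriv ((x - ζ k) / c) :=
    funext fun x ↦ (hG x).deriv
  refine ⟨contDiff_one_iff_deriv.2 ⟨fun x ↦ (hG x).differentiableAt, ?_⟩, fun x ↦ ?_⟩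
  · rw [hderiv]
    fun_prop
  rw [(hG x).deriv]
  have hsmall (k : Fin m) : |α k * c * bumpSignedSqDeriv ((x - ζ k) / c)| < 1 := by
    have hpos : 0 < 6 * |α k| := one_div_pos.1 (hc0.trans (hc1 k))
    calc |α k * c * bumpSignedSqDeriv ((x - ζ k) / c)|
        = |α k| * c * |bumpSignedSqDeriv ((x - ζ k) / c)| := by
          rw [abs_mul, abs_mul, abs_of_pos hc0]
      _ ≤ |α k| * c * 6 := by gcongr; exact abs_bumpSignedSqDeriv_le _
      _ = 6 * |α k| * c := by ring
      _ < 1 := (lt_div_iff₀' hpos).1 (hc1 k)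
  have hfar (j : Fin m) (hj : c ≤ |x - ζ j|) :
      α j * c * bumpSignedSqDeriv ((x - ζ j) / c) = 0 := by
    rw [bumpSignedSqDeriv_eq_zero, mul_zero]
    rwa [abs_div, abs_of_pos hc0, one_le_div hc0]
  by_cases hnear : ∃ k, |x - ζ k| < c
  · obtain ⟨k, hk⟩ := hnear
    rw [Finset.sum_eq_single_of_mem k (Finset.mem_univ k)
      fun j _ hj ↦ hfar j (le_abs_sub_of_abs_sub_lt hζ.monotone hc2 hj hk)]
    linarith [(abs_lt.1 (hsmall k)).1]
  · push Not at hnear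
    rw [Finset.sum_eq_zero fun k _ ↦ hfar k (hnear k)]
    norm_num

/-- The transform G is continuously differentiable with everywhere positive derivative. -/
theorem Gtransform_contDiff_deriv_pos
    (m : ℕ) (hm : 0 < m) (ζ α : Fin m → ℝ) (hζ : StrictMono ζ) (hα : ∀ k, α k ≠ 0)
    (c : ℝ) (hc0 : 0 < c) (hc1 : ∀ k, c < 1 / (6 * |α k|))
    (hc2 : ∀ (k : Fin m) (h : (k : ℕ) + 1 < m), c < (ζ ⟨(k : ℕ) + 1, h⟩ - ζ k) / 2) :
    ContDiff ℝ 1 (Gtransform m ζ α c) ∧ ∀ x : ℝ, 0 < deriv (Gtransform m ζ α c) x :=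
  Gtransform_contDiff_deriv_pos_general m ζ α hζ c hc0 hc1 hc2
end

section
/- Let n ∈ ℕ with n ≥ 2, δ = T/n, and let s, t ∈ [0,T] satisfy t > t̲ and s ≤ t̲ − δ. Define W̄_1 = (W_t − W_{t̲})/√(t − t̲), W̄_2 = (W_{t̲} − W_{t̲−(t−t̲)})/√(t − t̲), W̄_3 = (W_{t̲−(t−t̲)} − W_{t̲−δ})/√(δ − (t − t̲)), and P̄ = N_t − N_{t̲−δ}. Then for every event A ∈ F_s, P( A ∩ ( {P̄ > 0} ∪ {max_{i∈{1,2,3}} |W̄_i| > √(2 log(T/δ))} ) ) ≤ P(A) · ( 3δ/(T√(π log(T/δ))) + 2δ‖λ‖_∞ ). -/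
open MeasureTheory ProbabilityTheory

/-- Grid values of the Euler–Maruyama scheme with step size `δ` and initial value `x`. -/
noncomputable def emGrid {Ω : Type*} (μ σ ρ : ℝ → ℝ) (W N : ℝ → Ω → ℝ)
    (δ : ℝ) (x : ℝ) : ℕ → Ω → ℝ
  | 0, _ => x
  | (j + 1), ω =>
      emGrid μ σ ρ W N δ x j ω
        + μ (emGrid μ σ ρ W N δ x j ω) * δ
        + σ (emGrid μ σ ρ W N δ x j ω) * (W (((j : ℝ) + 1) * δ) ω - W ((j : ℝ) * δ) ω)
        + ρ (emGrid μ σ ρ W N δ x j ω) * (N (((j : ℝ) + 1) * δ) ω - N ((j : ℝ) * δ) ω)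

/-- The last grid point `t̲ = δ ⌊t/δ⌋` before time `t`. -/
noncomputable def lastGrid (δ t : ℝ) : ℝ := (⌊t / δ⌋.toNat : ℝ) * δ

/-- The continuous-time Euler–Maruyama scheme
`X_t = X_t̲ + μ(X_t̲)(t - t̲) + σ(X_t̲)(W_t - W_t̲) + ρ(X_t̲)(N_t - N_t̲)`. -/
noncomputable def emProc {Ω : Type*} (μ σ ρ : ℝ → ℝ) (W N : ℝ → Ω → ℝ)
    (δ : ℝ) (x : ℝ) (t : ℝ) (ω : Ω) : ℝ :=
  emGrid μ σ ρ W N δ x (⌊t / δ⌋.toNat) ω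
    + μ (emGrid μ σ ρ W N δ x (⌊t / δ⌋.toNat) ω) * (t - lastGrid δ t)
    + σ (emGrid μ σ ρ W N δ x (⌊t / δ⌋.toNat) ω) * (W t ω - W (lastGrid δ t) ω)
    + ρ (emGrid μ σ ρ W N δ x (⌊t / δ⌋.toNat) ω) * (N t ω - N (lastGrid δ t) ω)

open Real Set

/-! Each of the four increments is independent of `F_s`, so intersecting its tail event with
`A ∈ F_s` only multiplies the tail probability by `P(A)`, and a union bound splits the event into
four such pieces. Write `L = log(T/δ)`, so that `e^{-L} = δ/T`. Mills' inequality
`P(|Z| > x) ≤ 2 e^{-x²/2} / (x √(2π))` at `x = √(2L)` bounds each Brownian piece by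
`δ / (T √(πL))`, and `P(Poisson(κ) > 0) = 1 - e^{-κ} ≤ κ` bounds the Poisson piece by
`2δ‖λ‖_∞`, since the window `[t̲ - δ, t]` is shorter than `2δ`. -/

lemma hasDerivAt_neg_exp_neg_sq_div_two (z : ℝ) :
    HasDerivAt (fun z => -exp (-z ^ 2 / 2)) (z * exp (-z ^ 2 / 2)) z :=
  (((hasDerivAt_pow 2 z).fun_neg.div_const 2).congr_deriv (by ring) :
    HasDerivAt (fun z : ℝ => -z ^ 2 / 2) (-z) z).exp.fun_neg.congr_deriv (by ring)

lemma integrable_exp_neg_sq_div_two : Integrable fun z : ℝ => exp (-z ^ 2 / 2) := by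
  simpa [neg_div, div_eq_inv_mul] using integrable_exp_neg_mul_sq (b := 1 / 2) (by norm_num)

lemma integrable_mul_exp_neg_sq_div_two : Integrable fun z : ℝ => z * exp (-z ^ 2 / 2) := by
  simpa [neg_div, div_eq_inv_mul] using integrable_mul_exp_neg_mul_sq (b := 1 / 2) (by norm_num)

lemma integral_Ioi_mul_exp_neg_sq_div_two (x : ℝ) :
    ∫ z in Ioi x, z * exp (-z ^ 2 / 2) = exp (-x ^ 2 / 2) := by
  have hlim : Filter.Tendsto (fun z : ℝ => -exp (-z ^ 2 / 2)) Filter.atTop (nhds 0) := by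
    have : Filter.Tendsto (fun z : ℝ => -z ^ 2 / 2) Filter.atTop Filter.atBot := by
      simpa [neg_div] using (Filter.tendsto_pow_atTop two_ne_zero).atTop_div_const two_pos
    simpa using (tendsto_exp_atBot.comp this).neg
  rw [integral_Ioi_of_hasDerivAt_of_tendsto
    (hasDerivAt_neg_exp_neg_sq_div_two x).continuousAt.continuousWithinAt
    (fun z _ => hasDerivAt_neg_exp_neg_sq_div_two z)
    integrable_mul_exp_neg_sq_div_two.integrableOn hlim]
  ring

-- Mills' inequality: on `Ioi x` the weight `z / x` is at least one.
lemma integral_Ioi_exp_neg_sq_div_two_le {x : ℝ} (hx : 0 < x) :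
    ∫ z in Ioi x, exp (-z ^ 2 / 2) ≤ exp (-x ^ 2 / 2) / x := by
  rw [← integral_Ioi_mul_exp_neg_sq_div_two, div_eq_inv_mul, ← integral_const_mul]
  refine setIntegral_mono_on integrable_exp_neg_sq_div_two.integrableOn
    (integrable_mul_exp_neg_sq_div_two.const_mul _).integrableOn measurableSet_Ioi fun z hz => ?_
  have hxz : 1 ≤ x⁻¹ * z := by rw [inv_mul_eq_div, one_le_div hx]; exact (mem_Ioi.1 hz).le
  nlinarith [exp_pos (-z ^ 2 / 2)]

lemma gaussianReal_Ioi_le {x : ℝ} (hx : 0 < x) :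
    gaussianReal 0 1 (Ioi x) ≤ ENNReal.ofReal (exp (-x ^ 2 / 2) / (x * √(2 * π))) := by
  rw [gaussianReal_apply_eq_integral 0 one_ne_zero]
  refine ENNReal.ofReal_le_ofReal ?_
  calc ∫ z in Ioi x, gaussianPDFReal 0 1 z = (√(2 * π))⁻¹ * ∫ z in Ioi x, exp (-z ^ 2 / 2) := by
        simp [gaussianPDFReal, integral_const_mul]
    _ ≤ (√(2 * π))⁻¹ * (exp (-x ^ 2 / 2) / x) := by
        gcongr; exact integral_Ioi_exp_neg_sq_div_two_le hx
    _ = exp (-x ^ 2 / 2) / (x * √(2 * π)) := by ring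

lemma gaussianReal_lt_abs_le {x : ℝ} (hx : 0 < x) :
    gaussianReal 0 1 {z | x < |z|} ≤ ENNReal.ofReal (2 * (exp (-x ^ 2 / 2) / (x * √(2 * π)))) := by
  have hsplit : {z : ℝ | x < |z|} = Ioi x ∪ (fun z => -z) ⁻¹' Ioi x := by
    ext z; simp [lt_abs, lt_neg]
  have hneg : gaussianReal 0 1 ((fun z => -z) ⁻¹' Ioi x) = gaussianReal 0 1 (Ioi x) := by
    rw [← Measure.map_apply measurable_neg measurableSet_Ioi, gaussianReal_map_neg, neg_zero]
  rw [hsplit, two_mul, ENNReal.ofReal_add (by positivity) (by positivity)]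
  exact (measure_union_le _ _).trans
    (add_le_add (gaussianReal_Ioi_le hx) (hneg.le.trans (gaussianReal_Ioi_le hx)))

lemma gaussianReal_lt_abs_div_sqrt_le {v x : ℝ} (hv : 0 < v) (hx : 0 < x) :
    gaussianReal 0 v.toNNReal {y | x < |y / √v|}
      ≤ ENNReal.ofReal (2 * (exp (-x ^ 2 / 2) / (x * √(2 * π)))) := by
  have hstd : (gaussianReal 0 v.toNNReal).map (· / √v) = gaussianReal 0 1 := by
    rw [gaussianReal_map_div_const, zero_div]
    congr
    ext
    simp [sq_sqrt hv.le, hv.le, hv.ne']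
  have hpre : {y | x < |y / √v|} = (· / √v) ⁻¹' {z | x < |z|} := rfl
  rw [hpre, ← Measure.map_apply (by fun_prop) (measurableSet_lt measurable_const (by fun_prop)),
    hstd]
  exact gaussianReal_lt_abs_le hx

lemma poissonMeasure_Ioi_zero_le (r : NNReal) : poissonMeasure r (Ioi 0) ≤ r := by
  have hcompl : (Ioi 0 : Set ℕ) = {0}ᶜ := by ext k; simp [Nat.pos_iff_ne_zero]
  rw [hcompl, prob_compl_eq_one_sub (measurableSet_singleton 0), poissonMeasure_singleton,
    tsub_le_iff_right, pow_zero, Nat.factorial_zero, Nat.cast_one, mul_one, div_one,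
    ← ENNReal.ofReal_coe_nnreal, ← ENNReal.ofReal_add r.coe_nonneg (exp_pos _).le,
    ← ENNReal.ofReal_one]
  exact ENNReal.ofReal_le_ofReal (by linarith [add_one_le_exp (-(r : ℝ))])

lemma two_mul_exp_div_sqrt_two_mul {L : ℝ} (hL : 0 < L) :
    2 * (exp (-√(2 * L) ^ 2 / 2) / (√(2 * L) * √(2 * π))) = exp (-L) / √(π * L) := by
  have hsqrt : √(2 * L) * √(2 * π) = 2 * √(π * L) := by
    rw [← sqrt_mul (by positivity), show 2 * L * (2 * π) = 2 ^ 2 * (π * L) by ring,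
      sqrt_mul (by positivity), sqrt_sq zero_le_two]
  rw [hsqrt, sq_sqrt (by positivity), show -(2 * L) / 2 = -L by ring]
  field_simp

section Independence

variable {Ω β : Type*} {m m0 : MeasurableSpace Ω} [MeasurableSpace β] {P : Measure Ω}

lemma indep_comap_comp {Y : Ω → β} {γ : Type*} [MeasurableSpace γ] {g : β → γ} (hg : Measurable g)
    (h : Indep m (MeasurableSpace.comap Y inferInstance) P) :
    Indep m (MeasurableSpace.comap (g ∘ Y) inferInstance) P :=
  indep_of_indep_of_le_right h <| by
    rw [← MeasurableSpace.comap_comp]; exact MeasurableSpace.comap_mono hg.comap_le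

lemma measure_inter_preimage_eq_mul_map {Y : Ω → β}
    (h : Indep m (MeasurableSpace.comap Y inferInstance) P) (hY : P.map Y ≠ 0)
    {A : Set Ω} (hA : MeasurableSet[m] A) {S : Set β} (hS : MeasurableSet S) :
    P (A ∩ Y ⁻¹' S) = P A * P.map Y S := by
  -- `Measure.map` is `0` unless `Y` is a.e.-measurable, so a nonzero law makes `Y` measurable.
  rw [(Indep_iff _ _ P).1 h A _ hA ⟨S, hS, rfl⟩,
    Measure.map_apply_of_aemeasurable (.of_map_ne_zero hY) hS]

lemma measure_inter_gaussian_tail_le {Y : Ω → ℝ} {v : ℝ} (hv : 0 < v)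
    (hY : P.map Y = gaussianReal 0 v.toNNReal)
    (h : Indep m (MeasurableSpace.comap Y inferInstance) P)
    {A : Set Ω} (hA : MeasurableSet[m] A) {L : ℝ} (hL : 0 < L) :
    P (A ∩ {ω | √(2 * L) < |Y ω / √v|}) ≤ P A * ENNReal.ofReal (exp (-L) / √(π * L)) := by
  have hS : MeasurableSet {y : ℝ | √(2 * L) < |y / √v|} :=
    measurableSet_lt measurable_const (by fun_prop)
  rw [show {ω | √(2 * L) < |Y ω / √v|} = Y ⁻¹' {y | √(2 * L) < |y / √v|} from rfl,
    measure_inter_preimage_eq_mul_map h (by rw [hY]; exact (IsProbabilityMeasure.ne_zero _)) hA hS,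
    hY, ← two_mul_exp_div_sqrt_two_mul hL]
  gcongr
  exact gaussianReal_lt_abs_div_sqrt_le hv (by positivity)

lemma measure_inter_poisson_pos_le {Y : Ω → ℝ} {r : NNReal}
    (hY : P.map Y = (poissonMeasure r).map (fun k : ℕ => (k : ℝ)))
    (h : Indep m (MeasurableSpace.comap Y inferInstance) P)
    {A : Set Ω} (hA : MeasurableSet[m] A) :
    P (A ∩ {ω | 0 < Y ω}) ≤ P A * r := by
  rw [show {ω | 0 < Y ω} = Y ⁻¹' Ioi 0 from rfl,
    measure_inter_preimage_eq_mul_map h (by rw [hY]; exact (IsProbabilityMeasure.ne_zero _)) hA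
      measurableSet_Ioi, hY, Measure.map_apply measurable_from_top measurableSet_Ioi]
  gcongr
  simpa using poissonMeasure_Ioi_zero_le r

end Independence

lemma sub_lastGrid_lt {δ : ℝ} (hδ : 0 < δ) (t : ℝ) : t - lastGrid δ t < δ := by
  have hfloor : (⌊t / δ⌋ : ℝ) ≤ (⌊t / δ⌋.toNat : ℕ) := by exact_mod_cast Int.self_le_toNat _
  have hlt : t < (⌊t / δ⌋ + 1) * δ := (div_lt_iff₀ hδ).1 (Int.lt_floor_add_one _)
  rw [lastGrid]
  nlinarith

lemma intervalIntegral_le_mul_of_norm_le {f : ℝ → ℝ} {a b C : ℝ} (hab : a ≤ b)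
    (h : ∀ u ∈ Ioc a b, ‖f u‖ ≤ C) : ∫ u in a..b, f u ≤ (b - a) * C := by
  have hnorm := intervalIntegral.norm_integral_le_of_norm_le_const (f := f) (C := C)
    (by rwa [uIoc_of_le hab])
  rw [abs_of_nonneg (sub_nonneg.2 hab), mul_comm] at hnorm
  exact (le_norm_self _).trans hnorm

lemma measure_inter_union_lt_max_le {Ω : Type*} {_ : MeasurableSpace Ω} (μ : Measure Ω)
    (A E : Set Ω) (x : ℝ) (f g h : Ω → ℝ) :
    μ (A ∩ (E ∪ {ω | x < max (max (f ω) (g ω)) (h ω)}))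
      ≤ μ (A ∩ E) + (μ (A ∩ {ω | x < f ω}) + μ (A ∩ {ω | x < g ω}) + μ (A ∩ {ω | x < h ω})) := by
  have hsplit : A ∩ (E ∪ {ω | x < max (max (f ω) (g ω)) (h ω)})
      = A ∩ E ∪ (A ∩ {ω | x < f ω} ∪ A ∩ {ω | x < g ω} ∪ A ∩ {ω | x < h ω}) := by
    ext ω; simp only [mem_inter_iff, mem_union, mem_ofPred, lt_max_iff]; tauto
  rw [hsplit]
  refine (measure_union_le _ _).trans (add_le_add le_rfl ?_)
  exact (measure_union_le _ _).trans (add_le_add (measure_union_le _ _) le_rfl)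

section Increments

variable {Ω : Type*} {m0 : MeasurableSpace Ω} {F : Filtration ℝ m0} {P : Measure Ω}
  {T : ℝ} {W N : ℝ → Ω → ℝ} {s u v : ℝ} {A : Set Ω}

lemma indep_filtration_increments
    (h_indep : ∀ s t : ℝ, 0 ≤ s → s ≤ t → t ≤ T →
      Indep (MeasurableSpace.comap (fun ω => (W t ω - W s ω, N t ω - N s ω)) inferInstance)
        (F s) P)
    (hs : 0 ≤ s) (hsu : s ≤ u) (huv : u ≤ v) (hv : v ≤ T) :
    Indep (F s)
      (MeasurableSpace.comap (fun ω => (W v ω - W u ω, N v ω - N u ω)) inferInstance) P :=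
  indep_of_indep_of_le_left (h_indep u v (hs.trans hsu) huv hv).symm (F.mono hsu)

lemma measure_inter_brownian_increment_tail_le
    (hW_gauss : ∀ s t : ℝ, 0 ≤ s → s ≤ t → t ≤ T →
      Measure.map (fun ω => W t ω - W s ω) P = gaussianReal 0 (Real.toNNReal (t - s)))
    (h_indep : ∀ s t : ℝ, 0 ≤ s → s ≤ t → t ≤ T →
      Indep (MeasurableSpace.comap (fun ω => (W t ω - W s ω, N t ω - N s ω)) inferInstance)
        (F s) P)
    (hs : 0 ≤ s) (hsu : s ≤ u) (huv : u < v) (hv : v ≤ T) (hA : MeasurableSet[F s] A)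
    {L : ℝ} (hL : 0 < L) :
    P (A ∩ {ω | √(2 * L) < |(W v ω - W u ω) / √(v - u)|})
      ≤ P A * ENNReal.ofReal (exp (-L) / √(π * L)) :=
  measure_inter_gaussian_tail_le (sub_pos.2 huv) (hW_gauss u v (hs.trans hsu) huv.le hv)
    (indep_comap_comp measurable_fst (indep_filtration_increments h_indep hs hsu huv.le hv)) hA hL

lemma measure_inter_poisson_increment_pos_le {lam : ℝ → ℝ}
    (hlam_pos : ∀ t ∈ Icc 0 T, 0 < lam t) {lamB : ℝ} (hlamB : ∀ t ∈ Icc 0 T, lam t ≤ lamB)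
    (hN_poisson : ∀ s t : ℝ, 0 ≤ s → s ≤ t → t ≤ T →
      Measure.map (fun ω => N t ω - N s ω) P
        = Measure.map (fun k : ℕ => (k : ℝ))
            (poissonMeasure (Real.toNNReal (∫ u in s..t, lam u))))
    (h_indep : ∀ s t : ℝ, 0 ≤ s → s ≤ t → t ≤ T →
      Indep (MeasurableSpace.comap (fun ω => (W t ω - W s ω, N t ω - N s ω)) inferInstance)
        (F s) P)
    (hs : 0 ≤ s) (hsu : s ≤ u) (huv : u ≤ v) (hv : v ≤ T) (hA : MeasurableSet[F s] A) :
    P (A ∩ {ω | 0 < N v ω - N u ω}) ≤ P A * ENNReal.ofReal ((v - u) * lamB) := by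
  have hind := indep_comap_comp measurable_snd (indep_filtration_increments h_indep hs hsu huv hv)
  refine (measure_inter_poisson_pos_le (hN_poisson u v (hs.trans hsu) huv hv) hind hA).trans ?_
  gcongr
  refine ENNReal.coe_le_coe.2 (Real.toNNReal_le_toNNReal ?_)
  refine intervalIntegral_le_mul_of_norm_le huv fun r hr => ?_
  have hr' : r ∈ Icc 0 T := ⟨by linarith [hr.1], by linarith [hr.2]⟩
  rw [norm_of_nonneg (hlam_pos r hr').le]
  exact hlamB r hr'

end Increments

theorem brownian_poisson_increment_tail_estimate_general
    {Ω : Type*} {m0 : MeasurableSpace Ω}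
    (F : Filtration ℝ m0) (P : Measure Ω)
    (T : ℝ) (hT : 0 < T)
    (lam : ℝ → ℝ)
    (hlam_pos : ∀ t ∈ Set.Icc (0:ℝ) T, 0 < lam t)
    (lamB : ℝ) (hlamB : ∀ t ∈ Set.Icc (0:ℝ) T, lam t ≤ lamB)
    (W N : ℝ → Ω → ℝ)
    (hW_gauss : ∀ s t : ℝ, 0 ≤ s → s ≤ t → t ≤ T →
      Measure.map (fun ω => W t ω - W s ω) P = gaussianReal 0 (Real.toNNReal (t - s)))
    (hN_poisson : ∀ s t : ℝ, 0 ≤ s → s ≤ t → t ≤ T →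
      Measure.map (fun ω => N t ω - N s ω) P
        = Measure.map (fun k : ℕ => (k : ℝ))
            (poissonMeasure (Real.toNNReal (∫ u in s..t, lam u))))
    (h_indep : ∀ s t : ℝ, 0 ≤ s → s ≤ t → t ≤ T →
      Indep (MeasurableSpace.comap (fun ω => (W t ω - W s ω, N t ω - N s ω)) inferInstance)
        (F s) P)
    :
    ∀ n : ℕ, 2 ≤ n → ∀ s t : ℝ, s ∈ Set.Icc (0:ℝ) T → t ∈ Set.Icc (0:ℝ) T →
      lastGrid (T / n) t < t → s ≤ lastGrid (T / n) t - T / n →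
      ∀ A : Set Ω, MeasurableSet[F s] A →
      P (A ∩ ({ω | 0 < N t ω - N (lastGrid (T / n) t - T / n) ω}
          ∪ {ω | Real.sqrt (2 * Real.log (T / (T / n))) <
              max (max
                |(W t ω - W (lastGrid (T / n) t) ω) / Real.sqrt (t - lastGrid (T / n) t)|
                |(W (lastGrid (T / n) t) ω
                    - W (lastGrid (T / n) t - (t - lastGrid (T / n) t)) ω)
                  / Real.sqrt (t - lastGrid (T / n) t)|)
                |(W (lastGrid (T / n) t - (t - lastGrid (T / n) t)) ω
                    - W (lastGrid (T / n) t - T / n) ω)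
                  / Real.sqrt (T / n - (t - lastGrid (T / n) t))|}))
        ≤ P A * ENNReal.ofReal
            (3 * (T / n) / (T * Real.sqrt (Real.pi * Real.log (T / (T / n))))
              + 2 * (T / n) * lamB) := by
  intro n hn s t hs ht hlt hsb A hA
  set δ := T / n
  set b := lastGrid δ t
  have hδ : 0 < δ := by positivity
  have hTδ : T / δ = n := div_div_cancel₀ hT.ne'
  have hL : 0 < log (T / δ) := by rw [hTδ]; exact log_pos (by exact_mod_cast hn)
  have hexp : exp (-log (T / δ)) = δ / T := by rw [exp_neg, exp_log (by positivity), inv_div]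
  have hb : t - b < δ := sub_lastGrid_lt hδ t
  have hlamB0 : 0 ≤ lamB := (hlam_pos 0 ⟨le_rfl, hT.le⟩).le.trans (hlamB 0 ⟨le_rfl, hT.le⟩)
  have hN := (measure_inter_poisson_increment_pos_le hlam_pos hlamB hN_poisson h_indep hs.1 hsb
    (by linarith) ht.2 hA).trans (by gcongr; nlinarith : _ ≤ P A * .ofReal (2 * δ * lamB))
  have hW₁ := measure_inter_brownian_increment_tail_le hW_gauss h_indep hs.1
    (by linarith) hlt ht.2 hA hL
  have hW₂ := measure_inter_brownian_increment_tail_le hW_gauss h_indep hs.1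
    (u := b - (t - b)) (v := b) (by linarith) (by linarith) (by linarith [ht.2]) hA hL
  have hW₃ := measure_inter_brownian_increment_tail_le hW_gauss h_indep hs.1
    hsb (by linarith : b - δ < b - (t - b)) (by linarith [ht.2]) hA hL
  rw [sub_sub_cancel] at hW₂
  rw [show b - (t - b) - (b - δ) = δ - (t - b) by ring] at hW₃
  calc _ ≤ _ := measure_inter_union_lt_max_le _ _ _ _ _ _ _
    _ ≤ _ := add_le_add hN (add_le_add (add_le_add hW₁ hW₂) hW₃)
    _ = P A * .ofReal (3 * (exp (-log (T / δ)) / √(π * log (T / δ))) + 2 * δ * lamB) := by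
      rw [ENNReal.ofReal_add (by positivity) (by positivity),
        ENNReal.ofReal_mul (by norm_num : (0 : ℝ) ≤ 3), ENNReal.ofReal_ofNat]
      ring
    _ = _ := by rw [hexp, div_div, mul_div_assoc]

/-- Tail estimate for the normalized Brownian increments `W̄₁, W̄₂, W̄₃` and the Poisson
increment `P̄ = N_t - N_{t̲-δ}`: for every event `A ∈ F_s` with `s ≤ t̲ - δ`,
`P(A ∩ ({P̄ > 0} ∪ {max |W̄ᵢ| > √(2 log(T/δ))})) ≤ P(A)(3δ/(T √(π log(T/δ))) + 2δ‖λ‖_∞)`. -/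
theorem brownian_poisson_increment_tail_estimate
    {Ω : Type*} {m0 : MeasurableSpace Ω}
    (F : Filtration ℝ m0) (P : Measure Ω) [IsProbabilityMeasure P]
    (T : ℝ) (hT : 0 < T)
    (lam : ℝ → ℝ) (hlam_meas : Measurable lam)
    (hlam_pos : ∀ t ∈ Set.Icc (0:ℝ) T, 0 < lam t)
    (lamB : ℝ) (hlamB : ∀ t ∈ Set.Icc (0:ℝ) T, lam t ≤ lamB)
    (W N : ℝ → Ω → ℝ)
    (hW0 : ∀ ω, W 0 ω = 0) (hN0 : ∀ ω, N 0 ω = 0)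
    (hW_adapted : ∀ t ∈ Set.Icc (0:ℝ) T, Measurable[F t] (W t))
    (hN_adapted : ∀ t ∈ Set.Icc (0:ℝ) T, Measurable[F t] (N t))
    (hW_cont : ∀ᵐ ω ∂P, ContinuousOn (fun t => W t ω) (Set.Icc 0 T))
    (hN_mono : ∀ᵐ ω ∂P, ∀ s t : ℝ, 0 ≤ s → s ≤ t → t ≤ T → N s ω ≤ N t ω)
    (hN_rc : ∀ᵐ ω ∂P, ∀ t ∈ Set.Ico (0:ℝ) T,
      Filter.Tendsto (fun u => N u ω) (nhdsWithin t (Set.Ioi t)) (nhds (N t ω)))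
    (hN_int : ∀ᵐ ω ∂P, ∀ t ∈ Set.Icc (0:ℝ) T, ∃ k : ℕ, N t ω = k)
    (hW_gauss : ∀ s t : ℝ, 0 ≤ s → s ≤ t → t ≤ T →
      Measure.map (fun ω => W t ω - W s ω) P = gaussianReal 0 (Real.toNNReal (t - s)))
    (hN_poisson : ∀ s t : ℝ, 0 ≤ s → s ≤ t → t ≤ T →
      Measure.map (fun ω => N t ω - N s ω) P
        = Measure.map (fun k : ℕ => (k : ℝ))
            (poissonMeasure (Real.toNNReal (∫ u in s..t, lam u))))
    (h_indep : ∀ s t : ℝ, 0 ≤ s → s ≤ t → t ≤ T →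
      Indep (MeasurableSpace.comap (fun ω => (W t ω - W s ω, N t ω - N s ω)) inferInstance)
        (F s) P)
    (hWN_indep : ∀ s t : ℝ, 0 ≤ s → s ≤ t → t ≤ T →
      IndepFun (fun ω => W t ω - W s ω) (fun ω => N t ω - N s ω) P)
    :
    ∀ n : ℕ, 2 ≤ n → ∀ s t : ℝ, s ∈ Set.Icc (0:ℝ) T → t ∈ Set.Icc (0:ℝ) T →
      lastGrid (T / n) t < t → s ≤ lastGrid (T / n) t - T / n →
      ∀ A : Set Ω, MeasurableSet[F s] A →
      P (A ∩ ({ω | 0 < N t ω - N (lastGrid (T / n) t - T / n) ω}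
          ∪ {ω | Real.sqrt (2 * Real.log (T / (T / n))) <
              max (max
                |(W t ω - W (lastGrid (T / n) t) ω) / Real.sqrt (t - lastGrid (T / n) t)|
                |(W (lastGrid (T / n) t) ω
                    - W (lastGrid (T / n) t - (t - lastGrid (T / n) t)) ω)
                  / Real.sqrt (t - lastGrid (T / n) t)|)
                |(W (lastGrid (T / n) t - (t - lastGrid (T / n) t)) ω
                    - W (lastGrid (T / n) t - T / n) ω)
                  / Real.sqrt (T / n - (t - lastGrid (T / n) t))|}))
        ≤ P A * ENNReal.ofReal
            (3 * (T / n) / (T * Real.sqrt (Real.pi * Real.log (T / (T / n))))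
              + 2 * (T / n) * lamB) :=
  brownian_poisson_increment_tail_estimate_general F P T hT lam hlam_pos lamB hlamB W N hW_gauss
    hN_poisson h_indep
end
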